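/- Let D denote the operator D(u)(t) = u'(t)/t, and for t ∈ (0, 1/√2) define F(t) = ∫₀ᵗ x⁴·√(1−x²)·(t²−x²) dx. Then for every t ∈ (0, 1/√2), t·(D⁴F)(t) = (6 − 24t² + 16t⁴)/(1−t²)^{3/2}. -/

import Mathlib

open Set

/-- The operator `D(u)(t) = u'(t)/t`. -/
noncomputable def Dop (u : ℝ → ℝ) : ℝ → ℝ := fun t => deriv u t / t

/-- `F(t) = ∫₀ᵗ x⁴√(1−x²)(t²−x²) dx`. -/
noncomputable def Fcyl (t : ℝ) : ℝ :=
  ∫ x in (0 : ℝ)..t, x ^ 4 * Real.sqrt (1 - x ^ 2) * (t ^ 2 - x ^ 2)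

noncomputable def gcyl (x : ℝ) : ℝ := x ^ 4 * Real.sqrt (1 - x ^ 2)

noncomputable def Gcyl (t : ℝ) : ℝ := ∫ x in (0 : ℝ)..t, gcyl x

lemma gcyl_cont : Continuous gcyl := by
  unfold gcyl; fun_prop

lemma gcyl2_cont : Continuous (fun x : ℝ => x ^ 2 * gcyl x) :=
  (continuous_pow 2).mul gcyl_cont

lemma Gcyl_hasDerivAt (t : ℝ) : HasDerivAt Gcyl (gcyl t) t :=
  (gcyl_cont.integral_hasStrictDerivAt 0 t).hasDerivAt

lemma Fcyl_eq : Fcyl = fun t => t ^ 2 * Gcyl t - ∫ x in (0 : ℝ)..t, x ^ 2 * gcyl x := by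
  funext t
  unfold Fcyl Gcyl
  rw [← intervalIntegral.integral_const_mul, ← intervalIntegral.integral_sub
    (show IntervalIntegrable (fun x => t ^ 2 * gcyl x) MeasureTheory.volume 0 t from (continuous_const.mul gcyl_cont).intervalIntegrable _ _) (gcyl2_cont.intervalIntegrable _ _)]
  apply intervalIntegral.integral_congr
  intro x _
  unfold gcyl
  ring

lemma Fcyl_hasDerivAt (t : ℝ) : HasDerivAt Fcyl (2 * t * Gcyl t) t := by
  rw [Fcyl_eq]
  have h1 : HasDerivAt (fun t : ℝ => t ^ 2 * Gcyl t) (2 * t ^ 1 * Gcyl t + t ^ 2 * gcyl t) t := by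
    simpa using (show HasDerivAt (fun t : ℝ => t ^ 2 * Gcyl t) _ t from (hasDerivAt_pow 2 t).mul (Gcyl_hasDerivAt t))
  have h2 : HasDerivAt (fun t : ℝ => ∫ x in (0 : ℝ)..t, x ^ 2 * gcyl x) (t ^ 2 * gcyl t) t :=
    (gcyl2_cont.integral_hasStrictDerivAt 0 t).hasDerivAt
  have : HasDerivAt (fun t : ℝ => t ^ 2 * Gcyl t - ∫ x in (0 : ℝ)..t, x ^ 2 * gcyl x) _ t := h1.sub h2
  convert this using 1
  ring

/-- On `(0, 1/√2)`, the inverse spherical Radon transform in `ℝ⁶` of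
`√(1−x²) = 1/ρ_{IC}(x)` is given by
`t·(D⁴F)(t) = (6 − 24t² + 16t⁴)/(1−t²)^{3/2}`. -/
theorem cylinder_inverse_radon_first_piece :
    ∀ t ∈ Ioo (0 : ℝ) (Real.sqrt 2)⁻¹,
      t * (Dop^[4] Fcyl) t = (6 - 24 * t ^ 2 + 16 * t ^ 4) / (1 - t ^ 2) ^ ((3 : ℝ) / 2) := by
  have hU : IsOpen (Ioo (0 : ℝ) (Real.sqrt 2)⁻¹) := isOpen_Ioo
  -- basic bounds on the interval
  have hbound : ∀ s ∈ Ioo (0 : ℝ) (Real.sqrt 2)⁻¹, 0 < s ∧ s ^ 2 < 1 / 2 := by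
    intro s hs
    refine ⟨hs.1, ?_⟩
    have h2 : Real.sqrt 2 > 0 := by positivity
    have hs2 : s * Real.sqrt 2 < 1 := by
      have := hs.2
      calc s * Real.sqrt 2 < (Real.sqrt 2)⁻¹ * Real.sqrt 2 := by
            exact mul_lt_mul_of_pos_right this h2
        _ = 1 := inv_mul_cancel₀ h2.ne'
    have h22 : Real.sqrt 2 * Real.sqrt 2 = 2 := Real.mul_self_sqrt (by norm_num)
    nlinarith [hs.1]
  -- step 1
  have hA : ∀ s ∈ Ioo (0 : ℝ) (Real.sqrt 2)⁻¹, Dop Fcyl s = 2 * Gcyl s := by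
    intro s hs
    rw [show Dop Fcyl s = deriv Fcyl s / s from rfl, (Fcyl_hasDerivAt s).deriv]
    field_simp [(hbound s hs).1.ne']
  -- step 2
  have hB : ∀ s ∈ Ioo (0 : ℝ) (Real.sqrt 2)⁻¹,
      Dop (Dop Fcyl) s = 2 * s ^ 3 * Real.sqrt (1 - s ^ 2) := by
    intro s hs
    obtain ⟨hs0, hs2⟩ := hbound s hs
    have hev : deriv (Dop Fcyl) s = deriv (fun u => 2 * Gcyl u) s := by
      apply Filter.EventuallyEq.deriv_eq
      exact Filter.eventuallyEq_of_mem (hU.mem_nhds hs) hA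
    rw [show Dop (Dop Fcyl) s = deriv (Dop Fcyl) s / s from rfl, hev,
      ((Gcyl_hasDerivAt s).const_mul 2).deriv]
    unfold gcyl
    field_simp [hs0.ne']
  -- step 3
  have hC : ∀ s ∈ Ioo (0 : ℝ) (Real.sqrt 2)⁻¹,
      Dop (Dop (Dop Fcyl)) s = (6 * s - 8 * s ^ 3) / Real.sqrt (1 - s ^ 2) := by
    intro s hs
    obtain ⟨hs0, hs2⟩ := hbound s hs
    have h1s : (0 : ℝ) < 1 - s ^ 2 := by nlinarith
    have hr : (0 : ℝ) < Real.sqrt (1 - s ^ 2) := Real.sqrt_pos.mpr h1s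
    have hr2 : Real.sqrt (1 - s ^ 2) ^ 2 = 1 - s ^ 2 := Real.sq_sqrt h1s.le
    have hev : deriv (Dop (Dop Fcyl)) s
        = deriv (fun u => 2 * u ^ 3 * Real.sqrt (1 - u ^ 2)) s := by
      apply Filter.EventuallyEq.deriv_eq
      exact Filter.eventuallyEq_of_mem (hU.mem_nhds hs) hB
    have hsq : HasDerivAt (fun u : ℝ => Real.sqrt (1 - u ^ 2))
        (-(2 * s) / (2 * Real.sqrt (1 - s ^ 2))) s := by
      have h1 : HasDerivAt (fun u : ℝ => 1 - u ^ 2) (-(2 * s)) s := by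
        simpa using ((hasDerivAt_pow 2 s).const_sub 1)
      exact h1.sqrt h1s.ne'
    have hcube : HasDerivAt (fun u : ℝ => 2 * u ^ 3) (2 * (3 * s ^ 2)) s := by
      simpa using (hasDerivAt_pow 3 s).const_mul 2
    have hmul : HasDerivAt (fun u : ℝ => 2 * u ^ 3 * Real.sqrt (1 - u ^ 2)) _ s := hcube.mul hsq
    rw [show Dop (Dop (Dop Fcyl)) s = deriv (Dop (Dop Fcyl)) s / s from rfl, hev, hmul.deriv]
    field_simp
    linear_combination 6 * hr2
  -- main computation
  intro t ht
  obtain ⟨ht0, ht2⟩ := hbound t ht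
  have h1t : (0 : ℝ) < 1 - t ^ 2 := by nlinarith
  have hr : (0 : ℝ) < Real.sqrt (1 - t ^ 2) := Real.sqrt_pos.mpr h1t
  have hr2 : Real.sqrt (1 - t ^ 2) ^ 2 = 1 - t ^ 2 := Real.sq_sqrt h1t.le
  have h32 : (1 - t ^ 2) ^ ((3 : ℝ) / 2) = (1 - t ^ 2) * Real.sqrt (1 - t ^ 2) := by
    rw [show ((3 : ℝ) / 2) = 1 + 1 / 2 by norm_num, Real.rpow_add h1t, Real.rpow_one,
      ← Real.sqrt_eq_rpow]
  have h4 : Dop^[4] Fcyl = Dop (Dop (Dop (Dop Fcyl))) := rfl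
  rw [h4, show Dop (Dop (Dop (Dop Fcyl))) t = deriv (Dop (Dop (Dop Fcyl))) t / t from rfl]
  have hev : deriv (Dop (Dop (Dop Fcyl))) t
      = deriv (fun u => (6 * u - 8 * u ^ 3) / Real.sqrt (1 - u ^ 2)) t := by
    apply Filter.EventuallyEq.deriv_eq
    exact Filter.eventuallyEq_of_mem (isOpen_Ioo.mem_nhds ht) hC
  have hsq : HasDerivAt (fun u : ℝ => Real.sqrt (1 - u ^ 2))
      (-(2 * t) / (2 * Real.sqrt (1 - t ^ 2))) t := by
    have h1 : HasDerivAt (fun u : ℝ => 1 - u ^ 2) (-(2 * t)) t := by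
      simpa using ((hasDerivAt_pow 2 t).const_sub 1)
    exact h1.sqrt h1t.ne'
  have hnum : HasDerivAt (fun u : ℝ => 6 * u - 8 * u ^ 3) (6 - 8 * (3 * t ^ 2)) t := by
    have : HasDerivAt (fun u : ℝ => 6 * u - 8 * u ^ 3) _ t := ((hasDerivAt_id t).const_mul 6).sub ((hasDerivAt_pow 3 t).const_mul 8)
    convert this using 1
    ring
  have hdiv : HasDerivAt (fun u : ℝ => (6 * u - 8 * u ^ 3) / Real.sqrt (1 - u ^ 2)) _ t := hnum.div hsq hr.ne'
  rw [hev, hdiv.deriv, h32]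
  field_simp
  linear_combination (-6 * t ^ 2 + 8 * t ^ 4) * hr2
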